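/- arXiv:1611.06193 — 2 statements merged into one kernel-verified Lean document; each statement's English description precedes it below -/
import Mathlib

section
/- Let C be a d-dimensional copula of the random vector U = (U₁,...,U_d) with uniform margins, let λ₁,...,λ_d > 0, and suppose the limit a_U(w) = lim_{u→0⁺} P(∃i: Uᵢ > 1 − u^{λᵢ} wᵢ)/(u ℓ(u)) exists and is continuous in w ∈ (0,∞)^d, with ℓ slowly varying at 0. Let F̄ᵢ(t) = t^{−αᵢ} Lᵢ(t) with αᵢ > 0 and Lᵢ(t) → lᵢ > 0. If Xᵢ = F̄ᵢ⁻¹(1 − Uᵢ) (so X has copula C and margins Fᵢ), then for all w ∈ (0,∞)^d, lim_{t→∞} P(∃i: Xᵢ > t^{λᵢα₁/αᵢ} wᵢ) / (F̄₁(t) ℓ(F̄₁(t))) = a_U(w₁^{−α₁} r₁, ..., w_d^{−α_d} r_d), where rᵢ = lᵢ / l₁^{λᵢ}. -/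
open Filter MeasureTheory Topology

/-!
Write `u = F̄₁(t)`. Regular variation of the margins gives
`F̄ᵢ(t^{λᵢα₁/αᵢ} wᵢ) / u^{λᵢ} → wᵢ^{−αᵢ} rᵢ =: vᵢ`, and `Xᵢ > t^{λᵢα₁/αᵢ} wᵢ` is the event
`Uᵢ > 1 − F̄ᵢ(t^{λᵢα₁/αᵢ} wᵢ)`. So for large `t` the event `{∃ i, Xᵢ > …}` is squeezed between
the events `{∃ i, Uᵢ > 1 − u^{λᵢ} s vᵢ}` for `s` slightly below and slightly above `1`, whose
probabilities divided by `u ℓ(u)` tend to `a_U(s v)`; continuity of `a_U` at `v` closes the gap.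
-/

lemma tendsto_nhdsGT_zero_of_eq_rpow_neg_mul {F L : ℝ → ℝ} {α l : ℝ} (hα : 0 < α) (hl : 0 < l)
    (hF : ∀ t, 0 < t → F t = t ^ (-α) * L t) (hL : Tendsto L atTop (𝓝 l)) :
    Tendsto F atTop (𝓝[>] 0) := by
  have hF_eq : (fun t => t ^ (-α) * L t) =ᶠ[atTop] F := by
    filter_upwards [eventually_gt_atTop 0] with t ht using (hF t ht).symm
  refine tendsto_nhdsWithin_iff.2 ⟨?_, ?_⟩
  · simpa using ((tendsto_rpow_neg_atTop hα).mul hL).congr' hF_eq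
  · filter_upwards [eventually_gt_atTop 0, hL.eventually (lt_mem_nhds hl)] with t ht hLt
    rw [Set.mem_Ioi, hF t ht]
    positivity

lemma tendsto_comp_rpow_mul_div_rpow {F G L M : ℝ → ℝ} {α β lam w a b : ℝ}
    (hα : 0 < α) (hβ : 0 < β) (hlam : 0 < lam) (hw : 0 < w) (hb : 0 < b)
    (hF : ∀ t, 0 < t → F t = t ^ (-α) * L t) (hG : ∀ t, 0 < t → G t = t ^ (-β) * M t)
    (hL : Tendsto L atTop (𝓝 a)) (hM : Tendsto M atTop (𝓝 b)) :
    Tendsto (fun t => F (t ^ (lam * β / α) * w) / G t ^ lam) atTop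
      (𝓝 (w ^ (-α) * (a / b ^ lam))) := by
  set c := lam * β / α
  have hc : 0 < c := by positivity
  have hnum : Tendsto (fun t => L (t ^ c * w)) atTop (𝓝 a) :=
    hL.comp ((tendsto_rpow_atTop hc).atTop_mul_const hw)
  have hden : Tendsto (fun t => M t ^ lam) atTop (𝓝 (b ^ lam)) :=
    (Real.continuousAt_rpow_const b lam (Or.inl hb.ne')).tendsto.comp hM
  refine ((hnum.div hden (by positivity)).const_mul (w ^ (-α))).congr' ?_
  filter_upwards [eventually_gt_atTop 0, hM.eventually (lt_mem_nhds hb)] with t ht hMt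
  have hexp : c * -α = -(lam * β) := by rw [mul_neg, div_mul_cancel₀ _ hα.ne']
  have hFt : F (t ^ c * w) = t ^ (-(lam * β)) * (w ^ (-α) * L (t ^ c * w)) := by
    rw [hF _ (by positivity), Real.mul_rpow (by positivity) hw.le, ← Real.rpow_mul ht.le, hexp]
    ring
  have hGt : G t ^ lam = t ^ (-(lam * β)) * M t ^ lam := by
    rw [hG t ht, Real.mul_rpow (by positivity) hMt.le, ← Real.rpow_mul ht.le, neg_mul,
      mul_comm β, mul_comm]
  rw [Pi.div_apply, hFt, hGt, mul_div_mul_left _ _ (by positivity), mul_div_assoc]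

section Thresholds

variable {ι β : Type*} [Finite ι] {lam v : ι → ℝ} {l : Filter β} {u : β → ℝ} {q : β → ι → ℝ}

lemma eventually_rpow_mul_lt_of_tendsto_div (hu : ∀ᶠ t in l, 0 < u t)
    (hq : ∀ i, Tendsto (fun t => q t i / u t ^ lam i) l (𝓝 (v i)))
    {c : ι → ℝ} (hc : ∀ i, c i < v i) : ∀ᶠ t in l, ∀ i, u t ^ lam i * c i < q t i := by
  refine eventually_all.2 fun i => ?_
  filter_upwards [hu, (hq i).eventually (lt_mem_nhds (hc i))] with t hut hct
  rwa [lt_div_iff₀ (by positivity), mul_comm] at hct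

lemma eventually_lt_rpow_mul_of_tendsto_div (hu : ∀ᶠ t in l, 0 < u t)
    (hq : ∀ i, Tendsto (fun t => q t i / u t ^ lam i) l (𝓝 (v i)))
    {c : ι → ℝ} (hc : ∀ i, v i < c i) : ∀ᶠ t in l, ∀ i, q t i < u t ^ lam i * c i := by
  refine eventually_all.2 fun i => ?_
  filter_upwards [hu, (hq i).eventually (gt_mem_nhds (hc i))] with t hut hct
  rwa [div_lt_iff₀ (by positivity), mul_comm] at hct

end Thresholds

section TailSandwich

variable {ι Ω β : Type*} [MeasurableSpace Ω] (P : Measure Ω) [IsFiniteMeasure P]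
  (U : Ω → ι → ℝ)

lemma toReal_measure_exists_sub_lt_div_mono {q r : ι → ℝ} (h : ∀ i, q i ≤ r i) {D : ℝ}
    (hD : 0 < D) :
    (P {ω | ∃ i, 1 - q i < U ω i}).toReal / D ≤ (P {ω | ∃ i, 1 - r i < U ω i}).toReal / D := by
  refine div_le_div_of_nonneg_right ?_ hD.le
  refine ENNReal.toReal_mono (measure_ne_top P _) (measure_mono ?_)
  rintro ω ⟨i, hi⟩
  exact ⟨i, by linarith [h i]⟩

theorem tendsto_toReal_measure_exists_sub_lt_div [Finite ι] {lam : ι → ℝ} {ℓ : ℝ → ℝ}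
    (hℓ : ∀ᶠ s in 𝓝[>] 0, 0 < ℓ s) {aU : (ι → ℝ) → ℝ}
    (haU : ∀ w : ι → ℝ, (∀ i, 0 < w i) →
      Tendsto (fun s : ℝ => (P {ω | ∃ i, 1 - s ^ lam i * w i < U ω i}).toReal / (s * ℓ s))
        (𝓝[>] 0) (𝓝 (aU w)))
    {v : ι → ℝ} (hv : ∀ i, 0 < v i) (hcont : ContinuousAt aU v)
    {l : Filter β} {u : β → ℝ} (hu : Tendsto u l (𝓝[>] 0)) {q : β → ι → ℝ}
    (hq : ∀ i, Tendsto (fun t => q t i / u t ^ lam i) l (𝓝 (v i))) :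
    Tendsto (fun t => (P {ω | ∃ i, 1 - q t i < U ω i}).toReal / (u t * ℓ (u t))) l
      (𝓝 (aU v)) := by
  have hupos : ∀ᶠ t in l, 0 < u t := hu.eventually self_mem_nhdsWithin
  have hD : ∀ᶠ t in l, 0 < u t * ℓ (u t) := by
    filter_upwards [hupos, hu.eventually hℓ] with t h1 h2 using mul_pos h1 h2
  have hφ : ContinuousAt (fun s : ℝ => aU (s • v)) 1 :=
    hcont.comp_of_eq (continuous_id.smul continuous_const).continuousAt (one_smul ℝ v)
  have hlim : ∀ s : ℝ, 0 < s → Tendsto (fun t =>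
      (P {ω | ∃ i, 1 - u t ^ lam i * (s • v) i < U ω i}).toReal / (u t * ℓ (u t))) l
      (𝓝 (aU (s • v))) := fun s hs =>
    (haU (s • v) fun i => mul_pos hs (hv i)).comp hu
  refine tendsto_order.2 ⟨fun a ha => ?_, fun a ha => ?_⟩
  · obtain ⟨s, has, hs0, hs1⟩ : ∃ s, a < aU (s • v) ∧ 0 < s ∧ s < 1 :=
      ((hφ.eventually (lt_mem_nhds (by simpa using ha))).filter_mono nhdsWithin_le_nhds
        |>.and (Ioo_mem_nhdsLT zero_lt_one)).exists
    have hsv : ∀ i, (s • v) i < v i := fun i => by simpa using mul_lt_of_lt_one_left (hv i) hs1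
    filter_upwards [hD, (hlim s hs0).eventually (lt_mem_nhds has),
      eventually_rpow_mul_lt_of_tendsto_div hupos hq hsv] with t hDt hat hqt
    exact hat.trans_le
      (toReal_measure_exists_sub_lt_div_mono P U (fun i => (hqt i).le) hDt)
  · obtain ⟨s, has, hs1, -⟩ : ∃ s, aU (s • v) < a ∧ 1 < s ∧ s < 2 :=
      ((hφ.eventually (gt_mem_nhds (by simpa using ha))).filter_mono nhdsWithin_le_nhds
        |>.and (Ioo_mem_nhdsGT one_lt_two)).exists
    have hsv : ∀ i, v i < (s • v) i := fun i => by simpa using lt_mul_of_one_lt_left (hv i) hs1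
    filter_upwards [hD, (hlim s (zero_lt_one.trans hs1)).eventually (gt_mem_nhds has),
      eventually_lt_rpow_mul_of_tendsto_div hupos hq hsv] with t hDt hat hqt
    exact (toReal_measure_exists_sub_lt_div_mono P U (fun i => (hqt i).le) hDt).trans_lt hat

end TailSandwich

lemma lt_iff_sub_lt_of_strictAntiOn {F : ℝ → ℝ} (hF : StrictAntiOn F (Set.Ioi 0)) {s x y : ℝ}
    (hs : 0 < s) (hx : 0 < x) (hxy : F x = 1 - y) : s < x ↔ 1 - F s < y := by
  rw [← hF.lt_iff_gt hx hs, hxy]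
  constructor <;> intro h <;> linarith

theorem copula_operator_tail_implies_nonstandard_MRV_general
    {d : ℕ} [NeZero d] {Ω : Type*} [MeasurableSpace Ω]
    (P : Measure Ω) [IsProbabilityMeasure P]
    (U : Ω → Fin d → ℝ)
    (lam : Fin d → ℝ) (hlam : ∀ i, 0 < lam i)
    (ℓ : ℝ → ℝ) (hℓpos : ∀ u : ℝ, 0 < u → u ≤ 1 → 0 < ℓ u)
    (aU : (Fin d → ℝ) → ℝ)
    (haU : ∀ w : Fin d → ℝ, (∀ i, 0 < w i) →
      Tendsto (fun u : ℝ =>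
          (P {ω | ∃ i, 1 - u ^ lam i * w i < U ω i}).toReal / (u * ℓ u))
        (nhdsWithin 0 (Set.Ioi 0)) (nhds (aU w)))
    (haUcont : ContinuousOn aU {w : Fin d → ℝ | ∀ i, 0 < w i})
    (Fbar : Fin d → ℝ → ℝ) (L : Fin d → ℝ → ℝ) (α : Fin d → ℝ) (l : Fin d → ℝ)
    (hα : ∀ i, 0 < α i) (hl : ∀ i, 0 < l i)
    (hFbar : ∀ i, ∀ t : ℝ, 0 < t → Fbar i t = t ^ (-(α i)) * L i t)
    (hL : ∀ i, Tendsto (L i) atTop (nhds (l i)))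
    (hanti : ∀ i, StrictAntiOn (Fbar i) (Set.Ioi 0))
    (X : Fin d → Ω → ℝ)
    (hXpos : ∀ i ω, 0 < X i ω)
    (hX : ∀ i ω, Fbar i (X i ω) = 1 - U ω i) :
    ∀ w : Fin d → ℝ, (∀ i, 0 < w i) →
      Tendsto (fun t : ℝ =>
          (P {ω | ∃ i, t ^ (lam i * α 0 / α i) * w i < X i ω}).toReal /
            (Fbar 0 t * ℓ (Fbar 0 t)))
        atTop
        (nhds (aU fun i => w i ^ (-(α i)) * (l i / l 0 ^ lam i))) := by
  intro w hw
  set v : Fin d → ℝ := fun i => w i ^ (-(α i)) * (l i / l 0 ^ lam i)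
  have hv : ∀ i, 0 < v i := fun i => by have := hw i; have := hl i; have := hl 0; positivity
  have hcont : ContinuousAt aU v := haUcont.continuousAt <| eventually_all.2 fun i =>
    continuousAt_const.eventually_lt (continuous_apply i).continuousAt (hv i)
  have hℓ : ∀ᶠ s in 𝓝[>] 0, 0 < ℓ s := by
    filter_upwards [Ioc_mem_nhdsGT one_pos] with s hs using hℓpos s hs.1 hs.2
  have hu := tendsto_nhdsGT_zero_of_eq_rpow_neg_mul (hα 0) (hl 0) (hFbar 0) (hL 0)
  have hq := fun i => tendsto_comp_rpow_mul_div_rpow (hα i) (hα 0) (hlam i) (hw i) (hl 0)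
    (hFbar i) (hFbar 0) (hL i) (hL 0)
  refine (tendsto_toReal_measure_exists_sub_lt_div P U hℓ haU hv hcont hu hq).congr' ?_
  filter_upwards [eventually_gt_atTop 0] with t ht
  congr 3
  ext ω
  refine exists_congr fun i =>
    (lt_iff_sub_lt_of_strictAntiOn (hanti i) ?_ (hXpos i ω) (hX i ω)).symm
  have := hw i
  positivity

/-- Theorem 3.1 (TDF-MRV): if the copula of `U` has a continuous upper operator exponent
function `a_U` with diagonal matrix index `diag(λ₁,...,λ_d)`, and the margins
`F̄ᵢ(t) = t^{−αᵢ} Lᵢ(t)` are regularly varying with `Lᵢ(t) → lᵢ > 0`, then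
`X` with `Xᵢ = F̄ᵢ⁻¹(1 − Uᵢ)` is non-standard regularly varying: for every `w > 0`,
`P(∃i: Xᵢ > t^{λᵢα₁/αᵢ} wᵢ)/(F̄₁(t) ℓ(F̄₁(t))) → a_U(w₁^{−α₁}r₁, ..., w_d^{−α_d}r_d)`
as `t → ∞`, where `rᵢ = lᵢ/l₁^{λᵢ}`. -/
theorem copula_operator_tail_implies_nonstandard_MRV
    {d : ℕ} [NeZero d] {Ω : Type*} [MeasurableSpace Ω]
    (P : Measure Ω) [IsProbabilityMeasure P]
    (U : Ω → Fin d → ℝ)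
    (hrange : ∀ ω i, U ω i ∈ Set.Icc (0 : ℝ) 1)
    (hunif : ∀ i, ∀ s ∈ Set.Icc (0 : ℝ) 1, P {ω | U ω i ≤ s} = ENNReal.ofReal s)
    (lam : Fin d → ℝ) (hlam : ∀ i, 0 < lam i)
    (ℓ : ℝ → ℝ) (hℓpos : ∀ u : ℝ, 0 < u → u ≤ 1 → 0 < ℓ u)
    (hℓ : ∀ s : ℝ, 0 < s →
      Tendsto (fun t : ℝ => ℓ (t * s) / ℓ t) (nhdsWithin 0 (Set.Ioi 0)) (nhds 1))
    (aU : (Fin d → ℝ) → ℝ)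
    (haU : ∀ w : Fin d → ℝ, (∀ i, 0 < w i) →
      Tendsto (fun u : ℝ =>
          (P {ω | ∃ i, 1 - u ^ lam i * w i < U ω i}).toReal / (u * ℓ u))
        (nhdsWithin 0 (Set.Ioi 0)) (nhds (aU w)))
    (haUcont : ContinuousOn aU {w : Fin d → ℝ | ∀ i, 0 < w i})
    (Fbar : Fin d → ℝ → ℝ) (L : Fin d → ℝ → ℝ) (α : Fin d → ℝ) (l : Fin d → ℝ)
    (hα : ∀ i, 0 < α i) (hl : ∀ i, 0 < l i)
    (hFbar : ∀ i, ∀ t : ℝ, 0 < t → Fbar i t = t ^ (-(α i)) * L i t)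
    (hL : ∀ i, Tendsto (L i) atTop (nhds (l i)))
    (hanti : ∀ i, StrictAntiOn (Fbar i) (Set.Ioi 0))
    (X : Fin d → Ω → ℝ)
    (hXpos : ∀ i ω, 0 < X i ω)
    (hX : ∀ i ω, Fbar i (X i ω) = 1 - U ω i) :
    ∀ w : Fin d → ℝ, (∀ i, 0 < w i) →
      Tendsto (fun t : ℝ =>
          (P {ω | ∃ i, t ^ (lam i * α 0 / α i) * w i < X i ω}).toReal /
            (Fbar 0 t * ℓ (Fbar 0 t)))
        atTop
        (nhds (aU fun i => w i ^ (-(α i)) * (l i / l 0 ^ lam i))) :=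
  copula_operator_tail_implies_nonstandard_MRV_general P U lam hlam ℓ hℓpos aU haU haUcont Fbar L α
    l hα hl hFbar hL hanti X hXpos hX
end

section
/- Let Ĉ(u₁,u₂) = [1 + (u₁^{−1/β}−1)/(1+λ) + (u₂^{−1/β}−1)/(1+λ) + (λ/(1+λ)) max{u₁^{−1/β}−1, u₂^{−1/β}−1}]^{−β} with λ, β > 0. Then for all w₁, w₂ > 0, lim_{u→0⁺} (u w₁ + u w₂ − Ĉ(u w₁, u w₂))/u = w₁ + w₂ − [(w₁^{−1/β} + w₂^{−1/β})/(1+λ) + (λ/(1+λ)) max{w₁^{−1/β}, w₂^{−1/β}}]^{−β}. -/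
open Filter Topology

/-!
With `s = u ^ (1/β)`, `a = w₁ ^ (-1/β)` and `b = w₂ ^ (-1/β)` we have
`(u w₁) ^ (-1/β) = s⁻¹ a` and `(u w₂) ^ (-1/β) = s⁻¹ b`, so the bracket of `Ĉ(u w₁, u w₂)` is
`(K - s/(1+λ)) / s` with `K = (a + b)/(1+λ) + λ/(1+λ) max a b`, and raising to `-β` turns `s⁻¹`
back into `u`: `Ĉ(u w₁, u w₂) = u (K - s/(1+λ)) ^ (-β)`. The difference quotient is therefore
`w₁ + w₂ - (K - s/(1+λ)) ^ (-β)`, which tends to `w₁ + w₂ - K ^ (-β)` as `s → 0`.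
-/

namespace Real

lemma tendsto_rpow_nhdsGT_zero {p : ℝ} (hp : 0 < p) :
    Tendsto (fun u : ℝ => u ^ p) (𝓝[>] 0) (𝓝 0) := by
  simpa [zero_rpow hp.ne'] using
    (continuousAt_rpow_const 0 p (Or.inr hp.le)).tendsto.mono_left
      (nhdsWithin_le_nhds (s := Set.Ioi 0))

lemma mul_rpow_neg_one_div {u w β : ℝ} (hu : 0 < u) (hw : 0 ≤ w) :
    (u * w) ^ (-(1 / β)) = (u ^ (1 / β))⁻¹ * w ^ (-(1 / β)) := by
  rw [mul_rpow hu.le hw, rpow_neg hu.le]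

lemma div_rpow_one_div_rpow_neg {u x β : ℝ} (hu : 0 < u) (hx : 0 ≤ x) (hβ : β ≠ 0) :
    (x / u ^ (1 / β)) ^ (-β) = u * x ^ (-β) := by
  rw [div_rpow hx (rpow_nonneg hu.le _), ← rpow_mul hu.le, one_div_mul_eq_div,
    neg_div, div_self hβ, rpow_neg_one]
  field_simp

end Real

lemma paretoIV_bracket_inv_mul (lam s a b : ℝ) (hlam : 1 + lam ≠ 0) (hs : 0 < s) :
    1 + (s⁻¹ * a - 1) / (1 + lam) + (s⁻¹ * b - 1) / (1 + lam) +
        lam / (1 + lam) * max (s⁻¹ * a - 1) (s⁻¹ * b - 1) =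
      ((a + b) / (1 + lam) + lam / (1 + lam) * max a b - s / (1 + lam)) / s := by
  rw [max_sub_sub_right, ← mul_max_of_nonneg _ _ (inv_nonneg.2 hs.le)]
  field_simp
  ring

/-- Standard lower exponent function of the survival copula of the bivariate Pareto of the
fourth kind: with
`Ĉ(u₁,u₂) = [1 + (u₁^{−1/β}−1)/(1+λ) + (u₂^{−1/β}−1)/(1+λ)
            + (λ/(1+λ)) max{u₁^{−1/β}−1, u₂^{−1/β}−1}]^{−β}`,
for all `w₁, w₂ > 0`, `(u w₁ + u w₂ − Ĉ(u w₁, u w₂))/u →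
  w₁ + w₂ − [(w₁^{−1/β} + w₂^{−1/β})/(1+λ) + (λ/(1+λ)) max{w₁^{−1/β}, w₂^{−1/β}}]^{−β}`
as `u → 0⁺`. -/
theorem bivariate_pareto_copula_exponent (lam β : ℝ) (hlam : 0 < lam) (hβ : 0 < β)
    (w1 w2 : ℝ) (hw1 : 0 < w1) (hw2 : 0 < w2) :
    Tendsto (fun u : ℝ =>
        (u * w1 + u * w2 -
            (1 + ((u * w1) ^ (-(1 / β)) - 1) / (1 + lam) +
                ((u * w2) ^ (-(1 / β)) - 1) / (1 + lam) +
                (lam / (1 + lam)) *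
                  max ((u * w1) ^ (-(1 / β)) - 1) ((u * w2) ^ (-(1 / β)) - 1)) ^ (-β)) / u)
      (nhdsWithin 0 (Set.Ioi 0))
      (nhds (w1 + w2 -
        ((w1 ^ (-(1 / β)) + w2 ^ (-(1 / β))) / (1 + lam) +
            (lam / (1 + lam)) * max (w1 ^ (-(1 / β))) (w2 ^ (-(1 / β)))) ^ (-β))) := by
  set K := (w1 ^ (-(1 / β)) + w2 ^ (-(1 / β))) / (1 + lam) +
    lam / (1 + lam) * max (w1 ^ (-(1 / β))) (w2 ^ (-(1 / β)))
  have hK : 0 < K := by positivity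
  have hinner : Tendsto (fun u : ℝ => K - u ^ (1 / β) / (1 + lam)) (𝓝[>] 0) (𝓝 K) := by
    simpa using
      ((Real.tendsto_rpow_nhdsGT_zero (one_div_pos.2 hβ)).div_const (1 + lam)).const_sub K
  refine ((hinner.rpow_const (Or.inl hK.ne')).const_sub (w1 + w2)).congr' ?_
  filter_upwards [self_mem_nhdsWithin, hinner.eventually (eventually_gt_nhds hK)] with u hu hpos
  rw [Real.mul_rpow_neg_one_div hu hw1.le, Real.mul_rpow_neg_one_div hu hw2.le,
    paretoIV_bracket_inv_mul _ _ _ _ (by positivity) (Real.rpow_pos_of_pos hu _),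
    Real.div_rpow_one_div_rpow_neg hu hpos.le hβ.ne']
  field_simp [(Set.mem_Ioi.1 hu).ne']
end
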